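/- arXiv:2001.03892 — 3 statements merged into one kernel-verified Lean document; each statement's English description precedes it below -/
import Mathlib

section
/- If two splitting filtrations 𝔖 and 𝔖′ of order N have the same branch set B(𝔖) = B(𝔖′), then for every branch λ the branch degrees coincide: deg_𝔖(λ) = deg_𝔖′(λ). -/
open Finset MeasureTheory

noncomputable section

structure SplittingFiltration (N : ℕ) where
  L : ℕ
  π : ℕ → Finpartition (Finset.univ : Finset (Fin N))
  top_eq : (π 0).parts = {Finset.univ}
  strict : ∀ ℓ < L, π (ℓ + 1) < π ℓ
  bot_eq : ∀ ℓ, L ≤ ℓ → π ℓ = ⊥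

namespace SplittingFiltration

variable {N : ℕ} (S : SplittingFiltration N)

/-- The branch set: non-singleton blocks appearing in levels `0,…,L−1`. -/
def branches : Finset (Finset (Fin N)) :=
  ((Finset.range S.L).biUnion fun ℓ => (S.π ℓ).parts).filter fun b => 1 < b.card

/-- The branch depth: the largest level index `ℓ < L` whose partition contains `b`. -/
def depth (b : Finset (Fin N)) : ℕ := sSup {ℓ | ℓ < S.L ∧ b ∈ (S.π ℓ).parts}

/-- The branch degree: the number of blocks of the next level contained in `b`. -/
def deg (b : Finset (Fin N)) : ℕ := ((S.π (S.depth b + 1)).parts.filter fun c => c ⊆ b).card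

/-- The multiplicity `M_{𝔖,q}`, a product of falling factorials `(q−1)_{deg−1}`. -/
def mult (q : ℕ) : ℕ := ∏ b ∈ S.branches, (q - 1).descFactorial (S.deg b - 1)

/-- A splitting filtration is reduced if each branch lies in exactly one level. -/
def Reduced : Prop := ∀ b ∈ S.branches, ∃! ℓ, ℓ < S.L ∧ b ∈ (S.π ℓ).parts

end SplittingFiltration

/-- The rank of a partition of `[N]`: `N` minus the number of blocks. -/
def prank {N : ℕ} (P : Finpartition (Finset.univ : Finset (Fin N))) : ℕ :=
  N - P.parts.card

/-- The set of ordered pairs `(i,j)` with `i < j`. -/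
def pairFinset (N : ℕ) : Finset (Fin N × Fin N) := Finset.univ.filter fun p => p.1 < p.2

/-- `Σ_{i<j, i,j ∈ b} s i j`. -/
def pairSum {N : ℕ} (s : Fin N → Fin N → ℂ) (b : Finset (Fin N)) : ℂ :=
  ∑ p ∈ (pairFinset N).filter (fun p => p.1 ∈ b ∧ p.2 ∈ b), s p.1 p.2

/-- Branch exponent `e_b(s) = (#b − 1) + Σ_{i<j ∈ b} s_{ij}`. -/
def branchExp {N : ℕ} (s : Fin N → Fin N → ℂ) (b : Finset (Fin N)) : ℂ :=
  ((b.card : ℂ) - 1) + pairSum s b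

/-- Level exponent `E_{𝔖,ℓ}(s) = Σ_{b ∈ B(𝔖) ∩ π_ℓ} e_b(s)`. -/
def levelExp {N : ℕ} (S : SplittingFiltration N) (s : Fin N → Fin N → ℂ) (ℓ : ℕ) : ℂ :=
  ∑ b ∈ (S.π ℓ).parts.filter (fun b => 1 < b.card), branchExp s b

/-- `m_ℓ = −1 + n_0 + ⋯ + n_{ℓ−1}`. -/
def mval (n : ℕ → ℕ) (ℓ : ℕ) : ℤ := (∑ t ∈ Finset.range ℓ, (n t : ℤ)) - 1

/-- Two indices lie in a common block of the partition `P`. -/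
def SamePart {N : ℕ} (P : Finpartition (Finset.univ : Finset (Fin N))) (i j : Fin N) : Prop :=
  ∃ b ∈ P.parts, i ∈ b ∧ j ∈ b

/-- `x ∈ T(𝔖, n)`: the level pair associated to `x` is `(𝔖, n)`. -/
def InT {K : Type*} [NormedField K] (q : ℕ) {N : ℕ} (S : SplittingFiltration N)
    (n : ℕ → ℕ) (x : Fin N → K) : Prop :=
  (∀ i, ‖x i‖ ≤ 1) ∧
  (∀ ℓ < S.L, ∀ i j : Fin N,
    SamePart (S.π ℓ) i j ↔ ‖x i - x j‖ ≤ (q : ℝ) ^ (-(mval n (ℓ + 1)))) ∧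
  (∀ i j : Fin N, i ≠ j → ∃ ℓ < S.L, ‖x i - x j‖ = (q : ℝ) ^ (-(mval n (ℓ + 1)))) ∧
  (∀ ℓ < S.L, ∃ i j : Fin N, i ≠ j ∧ ‖x i - x j‖ = (q : ℝ) ^ (-(mval n (ℓ + 1))))

lemma pairFinset_nonempty {N : ℕ} (hN : 2 ≤ N) : (pairFinset N).Nonempty := by
  refine ⟨(⟨0, by omega⟩, ⟨1, by omega⟩), ?_⟩
  simp only [pairFinset, Finset.mem_filter, Finset.mem_univ, true_and]
  exact Fin.mk_lt_mk.mpr (by omega)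

/-- The diameter `max_{i<j} ‖x_i − x_j‖`. -/
def maxDist {K : Type*} [NormedField K] {N : ℕ} (hN : 2 ≤ N) (x : Fin N → K) : ℝ :=
  (pairFinset N).sup' (pairFinset_nonempty hN) fun p => ‖x p.1 - x p.2‖

/-- The minimum distance `min_{i<j} ‖x_i − x_j‖`. -/
def minDist {K : Type*} [NormedField K] {N : ℕ} (hN : 2 ≤ N) (x : Fin N → K) : ℝ :=
  (pairFinset N).inf' (pairFinset_nonempty hN) fun p => ‖x p.1 - x p.2‖

/-!
The blocks of `π (depth b + 1)` inside a branch `b` can be read off the branch set alone: they are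
the maximal branches strictly inside `b`, together with the singletons `{i}` of the points `i ∈ b`
lying in no such branch. Equivalently, they are the maximal proper subsets of `b` that are branches
or singletons; so `deg b`, which counts them, depends only on the branch set.
-/

theorem Finpartition.subset_of_le_of_mem {α : Type*} [DecidableEq α] {s : Finset α}
    {P Q : Finpartition s} (hPQ : P ≤ Q) {p q : Finset α} (hp : p ∈ P.parts)
    (hq : q ∈ Q.parts) {a : α} (hap : a ∈ p) (haq : a ∈ q) : p ⊆ q := by
  obtain ⟨r, hr, hpr⟩ := hPQ hp
  rwa [Q.eq_of_mem_parts hr hq (hpr hap) haq] at hpr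

namespace SplittingFiltration

variable {N : ℕ} (S : SplittingFiltration N)

theorem antitone_π : Antitone S.π := by
  refine antitone_nat_of_succ_le fun ℓ => ?_
  rcases lt_or_ge ℓ S.L with hℓ | hℓ
  · exact (S.strict ℓ hℓ).le
  · rw [S.bot_eq (ℓ + 1) (by omega)]
    exact bot_le

theorem lt_L_of_mem_parts {ℓ : ℕ} {c : Finset (Fin N)} (hc : c ∈ (S.π ℓ).parts)
    (hcard : 1 < c.card) : ℓ < S.L := by
  by_contra! hℓ
  rw [S.bot_eq ℓ hℓ, Finpartition.mem_bot_iff] at hc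
  obtain ⟨a, -, rfl⟩ := hc
  simp at hcard

theorem mem_branches_iff {b : Finset (Fin N)} :
    b ∈ S.branches ↔ 1 < b.card ∧ ∃ ℓ < S.L, b ∈ (S.π ℓ).parts := by
  simp only [branches, mem_filter, mem_biUnion, mem_range]
  tauto

theorem mem_branches_of_mem_parts {ℓ : ℕ} {c : Finset (Fin N)} (hc : c ∈ (S.π ℓ).parts)
    (hcard : 1 < c.card) : c ∈ S.branches :=
  S.mem_branches_iff.2 ⟨hcard, ℓ, S.lt_L_of_mem_parts hc hcard, hc⟩

section depth

variable {S} {b : Finset (Fin N)}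

theorem bddAbove_levels_mem : BddAbove {ℓ | ℓ < S.L ∧ b ∈ (S.π ℓ).parts} :=
  ⟨S.L, fun _ hℓ => hℓ.1.le⟩

theorem le_depth {ℓ : ℕ} (hℓ : ℓ < S.L) (hb : b ∈ (S.π ℓ).parts) : ℓ ≤ S.depth b :=
  le_csSup bddAbove_levels_mem ⟨hℓ, hb⟩

theorem mem_parts_depth (hb : b ∈ S.branches) : b ∈ (S.π (S.depth b)).parts := by
  obtain ⟨-, ℓ, hℓ, hbℓ⟩ := S.mem_branches_iff.1 hb
  exact (Nat.sSup_mem (s := {ℓ | ℓ < S.L ∧ b ∈ (S.π ℓ).parts}) ⟨ℓ, hℓ, hbℓ⟩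
    bddAbove_levels_mem).2

theorem notMem_parts_depth_succ (hb : b ∈ S.branches) :
    b ∉ (S.π (S.depth b + 1)).parts := fun hb' =>
  (S.le_depth (S.lt_L_of_mem_parts hb' (S.mem_branches_iff.1 hb).1) hb').not_gt
    (Nat.lt_succ_self _)

end depth

def IsSubblock {α : Type*} (B : Finset (Finset α)) (b c : Finset α) : Prop :=
  c ⊂ b ∧ (c ∈ B ∨ c.card = 1)

section children

variable {S} {b : Finset (Fin N)}

theorem subset_of_mem_parts_depth_succ (hb : b ∈ S.branches) {f : Finset (Fin N)}
    (hf : f ∈ (S.π (S.depth b + 1)).parts) {i : Fin N} (hif : i ∈ f) (hib : i ∈ b) :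
    f ⊆ b :=
  Finpartition.subset_of_le_of_mem (S.antitone_π (Nat.le_succ _)) hf (S.mem_parts_depth hb)
    hif hib

theorem isSubblock_of_mem_parts_depth_succ (hb : b ∈ S.branches) {f : Finset (Fin N)}
    (hf : f ∈ (S.π (S.depth b + 1)).parts) (hfb : f ⊆ b) : IsSubblock S.branches b f := by
  refine ⟨hfb.ssubset_of_ne fun hfb => S.notMem_parts_depth_succ hb (hfb ▸ hf), ?_⟩
  rcases lt_or_ge 1 f.card with hcard | hcard
  · exact Or.inl (S.mem_branches_of_mem_parts hf hcard)
  · exact Or.inr <|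
      hcard.antisymm (Finset.one_le_card.2 (Finpartition.nonempty_of_mem_parts _ hf))

/-- A branch `c ⊂ b` lives at a level deeper than `depth b`, since at a level `ℓ ≤ depth b`
the block through a point of `c` contains all of `b`. -/
theorem subset_of_isSubblock (hb : b ∈ S.branches) {c f : Finset (Fin N)}
    (hc : IsSubblock S.branches b c) (hf : f ∈ (S.π (S.depth b + 1)).parts) {i : Fin N}
    (hic : i ∈ c) (hif : i ∈ f) : c ⊆ f := by
  obtain ⟨hcb, hcB | hcard⟩ := hc
  · obtain ⟨-, ℓ, hℓ, hcℓ⟩ := S.mem_branches_iff.1 hcB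
    have hdepth : S.depth b + 1 ≤ ℓ := by
      by_contra! hℓb
      have hbc : b ⊆ c :=
        Finpartition.subset_of_le_of_mem (S.antitone_π (Nat.le_of_lt_succ hℓb))
          (S.mem_parts_depth hb) hcℓ (hcb.subset hic) hic
      exact hcb.not_subset hbc
    exact Finpartition.subset_of_le_of_mem (S.antitone_π hdepth) hcℓ hf hic hif
  · obtain ⟨j, rfl⟩ := Finset.card_eq_one.1 hcard
    rw [Finset.mem_singleton] at hic
    simpa [hic] using hif

theorem mem_parts_depth_succ_iff (hb : b ∈ S.branches) (c : Finset (Fin N)) :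
    c ∈ (S.π (S.depth b + 1)).parts ∧ c ⊆ b ↔ Maximal (IsSubblock S.branches b) c := by
  constructor
  · rintro ⟨hc, hcb⟩
    refine ⟨isSubblock_of_mem_parts_depth_succ hb hc hcb, fun e he hce => ?_⟩
    obtain ⟨i, hi⟩ := Finpartition.nonempty_of_mem_parts _ hc
    exact subset_of_isSubblock hb he hc (hce hi) hi
  · intro hc
    obtain ⟨i, hic⟩ : c.Nonempty := by
      rcases hc.prop.2 with hcB | hcard
      · exact Finset.one_le_card.1 (S.mem_branches_iff.1 hcB).1.le
      · exact Finset.card_pos.1 (by omega)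
    have hib : i ∈ b := hc.prop.1.subset hic
    obtain ⟨f, hf, hif⟩ := (S.π (S.depth b + 1)).exists_mem (Finset.mem_univ i)
    have hfb := subset_of_mem_parts_depth_succ hb hf hif hib
    have hcf := subset_of_isSubblock hb hc.prop hf hic hif
    have hfc := hc.2 (isSubblock_of_mem_parts_depth_succ hb hf hfb) hcf
    exact hcf.antisymm hfc ▸ ⟨hf, hfb⟩

end children

end SplittingFiltration

theorem deg_eq_of_branches_eq_general (N : ℕ)
    (S S' : SplittingFiltration N) (h : S.branches = S'.branches)
    (b : Finset (Fin N)) (hb : b ∈ S.branches) :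
    S.deg b = S'.deg b := by
  have hb' : b ∈ S'.branches := h ▸ hb
  unfold SplittingFiltration.deg
  congr 1
  ext c
  rw [mem_filter, mem_filter, SplittingFiltration.mem_parts_depth_succ_iff hb,
    SplittingFiltration.mem_parts_depth_succ_iff hb', h]

/-- filtrations with equal branch sets have equal branch degrees. -/
theorem deg_eq_of_branches_eq (N : ℕ) (hN : 2 ≤ N)
    (S S' : SplittingFiltration N) (h : S.branches = S'.branches)
    (b : Finset (Fin N)) (hb : b ∈ S.branches) :
    S.deg b = S'.deg b :=
  deg_eq_of_branches_eq_general N S S' h b hb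
end
end

section
/- For all N ≥ 2, the number of reduced splitting filtrations of order N is at least (N−1)!, i.e., (N−1)! ≤ #R_N ≤ #S_N. -/
open Finset MeasureTheory

noncomputable section

/-!
A splitting filtration has at most as many levels as there are partitions of `[N]`, so there
are finitely many of them. For the lower bound, a permutation `σ` of `{1, …, N - 1}` gives the
filtration whose level `ℓ` consists of the block `{0} ∪ {i | ℓ ≤ σ i}` and singletons. Its only
branches are these blocks, one per level, so it is reduced; and `σ i` is read off as the last
level at which `i` shares a block with `0`, so distinct permutations give distinct filtrations.
-/

namespace Finpartition

variable {α : Type*} [Fintype α] [DecidableEq α]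

def ofBlock (s : Finset α) (hs : s.Nonempty) : Finpartition (univ : Finset α) :=
  (⊥ : Finpartition sᶜ).extend hs.ne_empty disjoint_compl_left
    (compl_sup_eq_top.trans top_eq_univ)

variable {s t : Finset α} {hs : s.Nonempty} {ht : t.Nonempty}

theorem mem_parts_ofBlock {u : Finset α} :
    u ∈ (ofBlock s hs).parts ↔ u = s ∨ ∃ i ∉ s, {i} = u := by
  simp only [ofBlock, extend_parts, mem_insert, mem_bot_iff, mem_compl]

theorem eq_of_mem_parts_ofBlock {u : Finset α} (hu : u ∈ (ofBlock s hs).parts)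
    (hcard : 1 < #u) : u = s := by
  rcases mem_parts_ofBlock.1 hu with rfl | ⟨i, -, rfl⟩
  · rfl
  · simp at hcard

theorem part_ofBlock {a : α} (ha : a ∈ s) : (ofBlock s hs).part a = s :=
  part_eq_of_mem _ (mem_parts_ofBlock.2 (.inl rfl)) ha

theorem parts_ofBlock_univ (hu : (univ : Finset α).Nonempty) :
    (ofBlock univ hu).parts = {univ} := by
  simp [ofBlock]

theorem ofBlock_singleton (a : α) : ofBlock {a} (singleton_nonempty a) = ⊥ := by
  refine le_bot_iff.1 fun u hu => ?_
  rcases mem_parts_ofBlock.1 hu with rfl | ⟨i, -, rfl⟩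
  all_goals exact ⟨_, mem_bot_iff.2 ⟨_, mem_univ _, rfl⟩, subset_rfl⟩

theorem ofBlock_le_ofBlock (h : s ⊆ t) : ofBlock s hs ≤ ofBlock t ht := by
  intro u hu
  rcases mem_parts_ofBlock.1 hu with rfl | ⟨i, hi, rfl⟩
  · exact ⟨t, mem_parts_ofBlock.2 (.inl rfl), h⟩
  · by_cases hit : i ∈ t
    · exact ⟨t, mem_parts_ofBlock.2 (.inl rfl), singleton_subset_iff.2 hit⟩
    · exact ⟨{i}, mem_parts_ofBlock.2 (.inr ⟨i, hit, rfl⟩), subset_rfl⟩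

theorem ofBlock_lt_ofBlock (h : s ⊂ t) : ofBlock s hs < ofBlock t ht := by
  refine (ofBlock_le_ofBlock h.subset).lt_of_ne fun heq => h.ne ?_
  obtain ⟨a, ha⟩ := hs
  rw [← part_ofBlock (hs := ⟨a, ha⟩) ha, heq, part_ofBlock (h.subset ha)]

end Finpartition

namespace SplittingFiltration

theorem L_lt_card {N : ℕ} (S : SplittingFiltration N) :
    S.L < Fintype.card (Finpartition (univ : Finset (Fin N))) := by
  have hanti : StrictAntiOn S.π (Set.Iic S.L) :=
    strictAntiOn_Iic_of_succ_lt fun ℓ hℓ => by simpa using S.strict ℓ hℓ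
  have := card_le_card_of_injOn S.π (s := range (S.L + 1)) (t := univ) (by simp)
    (hanti.injOn.mono fun ℓ hℓ => by simpa [Nat.lt_succ_iff] using hℓ)
  simpa using this

instance (N : ℕ) : Finite (SplittingFiltration N) := by
  set C := Fintype.card (Finpartition (univ : Finset (Fin N)))
  refine Finite.of_injective (β := Fin C × (Fin C → Finpartition _))
    (fun S => (⟨S.L, L_lt_card S⟩, fun ℓ => S.π ℓ)) fun S T h => ?_
  simp only [Prod.mk.injEq, Fin.mk.injEq, funext_iff] at h
  obtain ⟨hL, hπ⟩ := h
  have hπ' : S.π = T.π := funext fun ℓ => if hℓ : ℓ < C then hπ ⟨ℓ, hℓ⟩ else by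
    rw [S.bot_eq ℓ (by have := L_lt_card S; omega), T.bot_eq ℓ (by have := L_lt_card T; omega)]
  cases S; cases T
  exact (mk.injEq ..).mpr ⟨hL, hπ'⟩

variable {M : ℕ} (σ : Equiv.Perm (Fin (M + 1)))

def ofPermBlock (ℓ : ℕ) : Finset (Fin (M + 2)) :=
  insert 0 ((univ.filter fun i => ℓ ≤ (σ i : ℕ)).map (Fin.succEmb _))

variable {σ}

theorem zero_mem_ofPermBlock (ℓ : ℕ) : 0 ∈ ofPermBlock σ ℓ := mem_insert_self _ _

theorem ofPermBlock_nonempty (ℓ : ℕ) : (ofPermBlock σ ℓ).Nonempty :=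
  ⟨0, zero_mem_ofPermBlock ℓ⟩

theorem succ_mem_ofPermBlock {i : Fin (M + 1)} {ℓ : ℕ} :
    i.succ ∈ ofPermBlock σ ℓ ↔ ℓ ≤ σ i := by
  simp [ofPermBlock, Fin.succ_ne_zero]

theorem ofPermBlock_zero : ofPermBlock σ 0 = univ :=
  eq_univ_of_forall fun i =>
    i.cases (zero_mem_ofPermBlock 0) fun _ => succ_mem_ofPermBlock.2 (Nat.zero_le _)

theorem ofPermBlock_of_lt {ℓ : ℕ} (hℓ : M < ℓ) : ofPermBlock σ ℓ = {0} := by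
  refine eq_singleton_iff_unique_mem.2 ⟨zero_mem_ofPermBlock ℓ, fun i hi => ?_⟩
  induction i using Fin.cases with
  | zero => rfl
  | succ i => have := (σ i).isLt; have := succ_mem_ofPermBlock.1 hi; omega

theorem ofPermBlock_succ_ssubset {ℓ : ℕ} (hℓ : ℓ ≤ M) :
    ofPermBlock σ (ℓ + 1) ⊂ ofPermBlock σ ℓ := by
  refine ssubset_iff_of_subset (fun i hi => ?_) |>.2 ⟨(σ.symm ⟨ℓ, by omega⟩).succ, ?_⟩
  · induction i using Fin.cases with
    | zero => exact zero_mem_ofPermBlock ℓ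
    | succ i => exact succ_mem_ofPermBlock.2 (Nat.le_of_succ_le (succ_mem_ofPermBlock.1 hi))
  · simp [succ_mem_ofPermBlock]

theorem injOn_ofPermBlock : Set.InjOn (ofPermBlock σ) (Set.Iic M) :=
  (strictAntiOn_Iic_of_succ_lt fun ℓ hℓ => by
    simpa using ofPermBlock_succ_ssubset (σ := σ) (Nat.le_of_lt_succ hℓ)).injOn.mono
    fun ℓ hℓ => by simp at hℓ ⊢; omega

variable (σ)

def ofPerm : SplittingFiltration (M + 2) where
  L := M + 1
  π ℓ := Finpartition.ofBlock (ofPermBlock σ ℓ) (ofPermBlock_nonempty ℓ)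
  top_eq := by simp only [ofPermBlock_zero, Finpartition.parts_ofBlock_univ]
  strict ℓ hℓ := Finpartition.ofBlock_lt_ofBlock (ofPermBlock_succ_ssubset (by omega))
  bot_eq ℓ hℓ := by simp only [ofPermBlock_of_lt hℓ, Finpartition.ofBlock_singleton]

theorem ofPerm_reduced : (ofPerm σ).Reduced := by
  intro b hb
  simp only [branches, mem_filter, mem_biUnion, mem_range] at hb
  obtain ⟨⟨ℓ, hℓ, hbℓ⟩, hcard⟩ := hb
  have hblock {ℓ} (h : b ∈ ((ofPerm σ).π ℓ).parts) : b = ofPermBlock σ ℓ :=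
    Finpartition.eq_of_mem_parts_ofBlock (hs := ofPermBlock_nonempty ℓ) h hcard
  refine ⟨ℓ, ⟨hℓ, hbℓ⟩, fun ℓ' ⟨hℓ', hbℓ'⟩ => ?_⟩
  exact injOn_ofPermBlock (Nat.le_of_lt_succ hℓ') (Nat.le_of_lt_succ hℓ)
    ((hblock hbℓ').symm.trans (hblock hbℓ))

theorem ofPerm_injective : Function.Injective (ofPerm (M := M)) := by
  intro σ τ h
  have hblock (ℓ : ℕ) : ofPermBlock σ ℓ = ofPermBlock τ ℓ := by
    have := congrArg (fun S => (S.π ℓ).part 0) h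
    dsimp only [ofPerm] at this
    rwa [Finpartition.part_ofBlock (zero_mem_ofPermBlock ℓ),
      Finpartition.part_ofBlock (zero_mem_ofPermBlock ℓ)] at this
  ext i
  have h₁ := succ_mem_ofPermBlock.1 (hblock (σ i) ▸ succ_mem_ofPermBlock.2 le_rfl)
  have h₂ := succ_mem_ofPermBlock.1 ((hblock (τ i)).symm ▸ succ_mem_ofPermBlock.2 le_rfl)
  omega

end SplittingFiltration

/-- `(N−1)! ≤ #R_N ≤ #S_N`. -/
theorem card_bounds (N : ℕ) (hN : 2 ≤ N) :
    (N - 1).factorial ≤ Nat.card {S : SplittingFiltration N // S.Reduced} ∧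
      Nat.card {S : SplittingFiltration N // S.Reduced} ≤ Nat.card (SplittingFiltration N) := by
  obtain ⟨M, rfl⟩ : ∃ M, N = M + 2 := ⟨N - 2, by omega⟩
  refine ⟨?_, Nat.card_le_card_of_injective Subtype.val Subtype.val_injective⟩
  calc (M + 2 - 1).factorial = Nat.card (Equiv.Perm (Fin (M + 1))) := by
        simp [Fintype.card_perm]
    _ ≤ _ := Nat.card_le_card_of_injective
        (fun σ => ⟨SplittingFiltration.ofPerm σ, SplittingFiltration.ofPerm_reduced σ⟩)
        fun _ _ h => SplittingFiltration.ofPerm_injective (congrArg Subtype.val h)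
end
end

section
/- Let K be a p-field with residue field cardinality q. If x ∈ T(𝔖, n), then for all a, b ∈ ℂ and s = (s_{ij})_{i<j} ∈ ℂ^{C(N,2)}: (max_{i<j}|x_i−x_j|)^a (min_{i<j}|x_i−x_j|)^b ∏_{i<j}|x_i−x_j|^{s_{ij}} = q^{−(a+b+Σ_{i<j}s_{ij})(n₀−1)} · ∏_{ℓ=1}^{L(𝔖)−1} q^{−(b + E_{𝔖,ℓ}(s) − rank(π_ℓ)) n_ℓ}. -/
open Finset MeasureTheory

noncomputable section

/-! Each distance `‖x_i - x_j‖` (`i ≠ j`) equals `q^{-m_{ℓ+1}}` with `m_{ℓ+1} = n_0 + ⋯ + n_ℓ - 1`,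
where `ℓ` is the last level at which `i` and `j` share a block, because the thresholds
`q^{-m_{ℓ+1}}` strictly decrease; the extreme distances are the values at levels `0` and `L - 1`.
Taking `-log_q`, the claim becomes a linear identity between exponents. Exchanging the sums over
pairs and over levels, level `ℓ` collects `Σ_{b ∈ π_ℓ} Σ_{i<j ∈ b} s_{ij}`, which is
`E_{𝔖,ℓ}(s) - rank π_ℓ` since singleton blocks contribute nothing and `Σ_{b ∈ π_ℓ} (#b - 1) = rank π_ℓ`;
at level `0` it is the full sum `Σ_{i<j} s_{ij}`. -/

namespace Complex

lemma ofReal_zpow_cpow {r : ℝ} (hr : 0 ≤ r) (m : ℤ) (a : ℂ) :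
    ((r ^ m : ℝ) : ℂ) ^ a = (r : ℂ) ^ ((m : ℂ) * a) := by
  rw [← Real.rpow_intCast, ← cpow_mul_ofReal_nonneg hr]
  norm_cast

lemma cpow_sum {ι : Type*} {x : ℂ} (hx : x ≠ 0) (s : Finset ι) (f : ι → ℂ) :
    x ^ (∑ i ∈ s, f i) = ∏ i ∈ s, x ^ f i := by
  induction s using Finset.cons_induction with
  | empty => simp
  | cons i s hi ih => rw [sum_cons, prod_cons, cpow_add _ _ hx, ih]

end Complex

section mval

variable (n : ℕ → ℕ)

lemma mval_succ (k : ℕ) : mval n (k + 1) = mval n k + n k := by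
  simp only [mval, sum_range_succ]
  ring

lemma mval_mono : Monotone (mval n) := fun a b hab => by
  unfold mval
  gcongr

lemma mval_strictMonoOn {L : ℕ} (hn : ∀ ℓ < L, 0 < n ℓ) : StrictMonoOn (mval n) (Set.Iic L) :=
  fun a _ b hb hab => calc
    mval n a < mval n (a + 1) := by
      rw [mval_succ]
      exact lt_add_of_pos_right _ (by exact_mod_cast hn a (hab.trans_le hb))
    _ ≤ mval n b := mval_mono n hab

end mval

lemma mem_pairFinset {N : ℕ} {p : Fin N × Fin N} : p ∈ pairFinset N ↔ p.1 < p.2 := by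
  simp [pairFinset]

lemma exists_mem_pairFinset_norm_sub_eq {E : Type*} [SeminormedAddCommGroup E] {N : ℕ}
    (x : Fin N → E) {i j : Fin N} (hij : i ≠ j) :
    ∃ p ∈ pairFinset N, ‖x p.1 - x p.2‖ = ‖x i - x j‖ := by
  rcases hij.lt_or_gt with h | h
  · exact ⟨(i, j), mem_pairFinset.2 h, rfl⟩
  · exact ⟨(j, i), mem_pairFinset.2 h, norm_sub_rev _ _⟩

instance {N : ℕ} (P : Finpartition (Finset.univ : Finset (Fin N))) : DecidableRel (SamePart P) :=
  fun i j => inferInstanceAs (Decidable (∃ b ∈ P.parts, i ∈ b ∧ j ∈ b))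

section exponents

variable {N : ℕ} (s : Fin N → Fin N → ℂ)

lemma sum_pairSum_parts (P : Finpartition (Finset.univ : Finset (Fin N))) :
    ∑ b ∈ P.parts, pairSum s b
      = ∑ p ∈ (pairFinset N).filter (fun p => SamePart P p.1 p.2), s p.1 p.2 := by
  simp only [pairSum, sum_filter]
  rw [sum_comm]
  refine sum_congr rfl fun p _ => ?_
  by_cases h : SamePart P p.1 p.2
  · obtain ⟨b, hb, h1, h2⟩ := h
    rw [if_pos ⟨b, hb, h1, h2⟩, sum_eq_single_of_mem b hb, if_pos ⟨h1, h2⟩]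
    rintro c hc hcb
    exact if_neg fun hpc => hcb (P.eq_of_mem_parts hc hb hpc.1 h1)
  · rw [if_neg h]
    exact sum_eq_zero fun c hc => if_neg fun hpc => h ⟨c, hc, hpc⟩

lemma branchExp_eq_zero_of_card_eq_one {b : Finset (Fin N)} (hb : b.card = 1) :
    branchExp s b = 0 := by
  have hpairs : (pairFinset N).filter (fun p => p.1 ∈ b ∧ p.2 ∈ b) = ∅ :=
    filter_eq_empty_iff.2 fun p hp hpb =>
      (mem_pairFinset.1 hp).ne (card_le_one.1 hb.le _ hpb.1 _ hpb.2)
  simp [branchExp, pairSum, hpairs, hb]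

lemma levelExp_eq_sum_parts (S : SplittingFiltration N) (ℓ : ℕ) :
    levelExp S s ℓ = ∑ b ∈ (S.π ℓ).parts, branchExp s b := by
  refine sum_subset (filter_subset _ _) fun b hb hnb => ?_
  have hpos := ((S.π ℓ).nonempty_of_mem_parts hb).card_pos
  simp only [mem_filter, hb, true_and, not_lt] at hnb
  exact branchExp_eq_zero_of_card_eq_one s (by omega)

lemma sum_parts_card_sub_one (P : Finpartition (Finset.univ : Finset (Fin N))) :
    ∑ b ∈ P.parts, ((b.card : ℂ) - 1) = prank P := by
  have hcard : ∑ b ∈ P.parts, b.card = N := by simpa using P.sum_card_parts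
  have hle : P.parts.card ≤ N := by simpa using P.card_parts_le_card
  rw [sum_sub_distrib, ← Nat.cast_sum, hcard, prank, Nat.cast_sub hle]
  simp

lemma levelExp_sub_prank (S : SplittingFiltration N) (ℓ : ℕ) :
    levelExp S s ℓ - prank (S.π ℓ)
      = ∑ p ∈ (pairFinset N).filter (fun p => SamePart (S.π ℓ) p.1 p.2), s p.1 p.2 := by
  rw [levelExp_eq_sum_parts, ← sum_pairSum_parts, ← sum_parts_card_sub_one]
  simp only [branchExp, sum_add_distrib]
  ring

lemma levelExp_zero_sub_prank (S : SplittingFiltration N) :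
    levelExp S s 0 - prank (S.π 0) = ∑ p ∈ pairFinset N, s p.1 p.2 := by
  have hroot : Finset.univ ∈ (S.π 0).parts := S.top_eq ▸ mem_singleton_self _
  rw [levelExp_sub_prank, filter_true_of_mem fun p _ => ⟨_, hroot, mem_univ _, mem_univ _⟩]

lemma sum_pairFinset_sum_samePart_mul (S : SplittingFiltration N) (n : ℕ → ℕ) :
    ∑ p ∈ pairFinset N,
        (∑ ℓ ∈ (range S.L).filter (fun ℓ => SamePart (S.π ℓ) p.1 p.2), (n ℓ : ℂ)) * s p.1 p.2
      = ∑ ℓ ∈ range S.L, n ℓ * (levelExp S s ℓ - prank (S.π ℓ)) := by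
  simp only [levelExp_sub_prank, sum_filter, sum_mul, mul_sum, ite_mul, mul_ite, zero_mul,
    mul_zero]
  exact sum_comm

end exponents

namespace InT

variable {K : Type*} [NormedField K] {q N : ℕ} {S : SplittingFiltration N} {n : ℕ → ℕ}
  {x : Fin N → K}

lemma one_le_L (hx : InT q S n x) (hN : 2 ≤ N) : 1 ≤ S.L := by
  obtain ⟨ℓ, hℓ, -⟩ := hx.2.2.1 ⟨0, by omega⟩ ⟨1, by omega⟩ (by simp [Fin.ext_iff])
  omega

lemma samePart_iff_le (hx : InT q S n x) (hq : 1 < q) (hn : ∀ ℓ < S.L, 0 < n ℓ)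
    {i j : Fin N} {ℓ ℓ' : ℕ} (hℓ : ℓ < S.L) (hℓ' : ℓ' < S.L)
    (hij : ‖x i - x j‖ = (q : ℝ) ^ (-mval n (ℓ + 1))) :
    SamePart (S.π ℓ') i j ↔ ℓ' ≤ ℓ := by
  have hmem : ∀ k < S.L, k + 1 ∈ Set.Iic S.L := fun k hk => Set.mem_Iic.2 hk
  rw [hx.2.1 ℓ' hℓ' i j, hij, zpow_le_zpow_iff_right₀ (by exact_mod_cast hq), neg_le_neg_iff,
    (mval_strictMonoOn n hn).le_iff_le (hmem ℓ' hℓ') (hmem ℓ hℓ)]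
  omega

lemma norm_sub_eq (hx : InT q S n x) (hq : 1 < q) (hn : ∀ ℓ < S.L, 0 < n ℓ)
    {i j : Fin N} (hij : i ≠ j) :
    ‖x i - x j‖ = (q : ℝ) ^
      (-(∑ ℓ ∈ (range S.L).filter (fun ℓ => SamePart (S.π ℓ) i j), (n ℓ : ℤ) - 1)) := by
  obtain ⟨ℓ, hℓ, h⟩ := hx.2.2.1 i j hij
  have hlevels : (range S.L).filter (fun ℓ' => SamePart (S.π ℓ') i j) = range (ℓ + 1) := by
    ext ℓ'
    simp only [mem_filter, mem_range]
    constructor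
    · rintro ⟨hℓ', hsame⟩
      have := (hx.samePart_iff_le hq hn hℓ hℓ' h).1 hsame
      omega
    · intro hℓ'
      exact ⟨by omega, (hx.samePart_iff_le hq hn hℓ (by omega) h).2 (by omega)⟩
  rw [hlevels, h, mval]

lemma maxDist_eq (hx : InT q S n x) (hq : 1 ≤ q) (hN : 2 ≤ N) :
    maxDist hN x = (q : ℝ) ^ (-mval n 1) := by
  have hq' : (1 : ℝ) ≤ q := by exact_mod_cast hq
  apply le_antisymm
  · refine sup'_le _ _ fun p hp => ?_
    obtain ⟨ℓ, -, h⟩ := hx.2.2.1 p.1 p.2 (mem_pairFinset.1 hp).ne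
    rw [h]
    exact zpow_le_zpow_right₀ hq' (neg_le_neg (mval_mono n (by omega)))
  · obtain ⟨i, j, hij, h⟩ := hx.2.2.2 0 (hx.one_le_L hN)
    obtain ⟨p, hp, hpij⟩ := exists_mem_pairFinset_norm_sub_eq x hij
    rw [← h, ← hpij]
    exact le_sup' (fun p : Fin N × Fin N => ‖x p.1 - x p.2‖) hp

lemma minDist_eq (hx : InT q S n x) (hq : 1 ≤ q) (hN : 2 ≤ N) :
    minDist hN x = (q : ℝ) ^ (-mval n S.L) := by
  have hq' : (1 : ℝ) ≤ q := by exact_mod_cast hq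
  have hL := hx.one_le_L hN
  apply le_antisymm
  · obtain ⟨i, j, hij, h⟩ := hx.2.2.2 (S.L - 1) (by omega)
    obtain ⟨p, hp, hpij⟩ := exists_mem_pairFinset_norm_sub_eq x hij
    rw [Nat.sub_add_cancel hL] at h
    rw [← h, ← hpij]
    exact inf'_le (fun p : Fin N × Fin N => ‖x p.1 - x p.2‖) hp
  · refine le_inf' _ _ fun p hp => ?_
    obtain ⟨ℓ, hℓ, h⟩ := hx.2.2.1 p.1 p.2 (mem_pairFinset.1 hp).ne
    rw [h]
    exact zpow_le_zpow_right₀ hq' (neg_le_neg (mval_mono n (by omega)))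

lemma prod_norm_sub_cpow (hx : InT q S n x) (hq : 1 < q) (hn : ∀ ℓ < S.L, 0 < n ℓ)
    (s : Fin N → Fin N → ℂ) :
    ∏ p ∈ pairFinset N, ((‖x p.1 - x p.2‖ : ℂ) ^ s p.1 p.2)
      = (q : ℂ) ^ (∑ p ∈ pairFinset N, s p.1 p.2
          - ∑ ℓ ∈ range S.L, n ℓ * (levelExp S s ℓ - prank (S.π ℓ))) := by
  rw [← sum_pairFinset_sum_samePart_mul, ← sum_sub_distrib,
    Complex.cpow_sum (by exact_mod_cast (by omega : q ≠ 0))]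
  refine prod_congr rfl fun p hp => ?_
  rw [hx.norm_sub_eq hq hn (mem_pairFinset.1 hp).ne, Complex.ofReal_zpow_cpow (by positivity),
    Complex.ofReal_natCast]
  push_cast
  congr 1
  ring

end InT

theorem value_on_T_general (K : Type*) [NormedField K]
    (q : ℕ) (hq : 2 ≤ q)
    (N : ℕ) (hN : 2 ≤ N)
    (S : SplittingFiltration N) (n : ℕ → ℕ) (hn : ∀ ℓ < S.L, 0 < n ℓ)
    (x : Fin N → K) (hx : InT q S n x)
    (a b : ℂ) (s : Fin N → Fin N → ℂ) :
    ((maxDist hN x : ℂ) ^ a) * ((minDist hN x : ℂ) ^ b) *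
        ∏ p ∈ pairFinset N, ((‖x p.1 - x p.2‖ : ℂ) ^ s p.1 p.2) =
      (q : ℂ) ^ (-(a + b + ∑ p ∈ pairFinset N, s p.1 p.2) * ((n 0 : ℂ) - 1)) *
        ∏ ℓ ∈ Finset.Ico 1 S.L,
          (q : ℂ) ^ (-(b + levelExp S s ℓ - (prank (S.π ℓ) : ℂ)) * (n ℓ : ℂ)) := by
  have hq0 : (q : ℂ) ≠ 0 := by exact_mod_cast (by omega : q ≠ 0)
  have hL := hx.one_le_L hN
  rw [hx.maxDist_eq (by omega) hN, hx.minDist_eq (by omega) hN, hx.prod_norm_sub_cpow hq hn,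
    Complex.ofReal_zpow_cpow (by positivity), Complex.ofReal_zpow_cpow (by positivity),
    Complex.ofReal_natCast, ← Complex.cpow_sum hq0, ← Complex.cpow_add _ _ hq0,
    ← Complex.cpow_add _ _ hq0, ← Complex.cpow_add _ _ hq0]
  congr 1
  have hIco : ∑ ℓ ∈ Ico 1 S.L, -(b + levelExp S s ℓ - prank (S.π ℓ)) * (n ℓ : ℂ)
      + ∑ ℓ ∈ Ico 1 S.L, n ℓ * (levelExp S s ℓ - prank (S.π ℓ))
      = -(b * ∑ ℓ ∈ Ico 1 S.L, (n ℓ : ℂ)) := by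
    rw [← sum_add_distrib, mul_sum, ← sum_neg_distrib]
    exact sum_congr rfl fun _ _ => by ring
  rw [sum_range_eq_add_Ico _ hL, levelExp_zero_sub_prank]
  push_cast [mval, sum_range_one, sum_range_eq_add_Ico _ hL]
  linear_combination -hIco

/-- on `T(𝔖, n)`, the quantity
`(max_{i<j}|x_i−x_j|)^a (min_{i<j}|x_i−x_j|)^b ∏_{i<j}|x_i−x_j|^{s_{ij}}` equals
`q^{−(a+b+Σ_{i<j}s_{ij})(n₀−1)} ∏_{ℓ=1}^{L−1} q^{−(b+E_{𝔖,ℓ}(s)−rank π_ℓ) n_ℓ}`. -/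
theorem value_on_T (K : Type*) [NormedField K] [IsUltrametricDist K]
    (q : ℕ) (hq : 2 ≤ q)
    (hval : ∀ x : K, x ≠ 0 → ∃ m : ℤ, ‖x‖ = (q : ℝ) ^ m)
    (N : ℕ) (hN : 2 ≤ N)
    (S : SplittingFiltration N) (n : ℕ → ℕ) (hn : ∀ ℓ < S.L, 0 < n ℓ)
    (x : Fin N → K) (hx : InT q S n x)
    (a b : ℂ) (s : Fin N → Fin N → ℂ) :
    ((maxDist hN x : ℂ) ^ a) * ((minDist hN x : ℂ) ^ b) *
        ∏ p ∈ pairFinset N, ((‖x p.1 - x p.2‖ : ℂ) ^ s p.1 p.2) =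
      (q : ℂ) ^ (-(a + b + ∑ p ∈ pairFinset N, s p.1 p.2) * ((n 0 : ℂ) - 1)) *
        ∏ ℓ ∈ Finset.Ico 1 S.L,
          (q : ℂ) ^ (-(b + levelExp S s ℓ - (prank (S.π ℓ) : ℂ)) * (n ℓ : ℂ)) :=
  value_on_T_general K q hq N hN S n hn x hx a b s
end
end
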